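/- arXiv:1409.0085 — 2 statements merged into one kernel-verified Lean document; each statement's English description precedes it below -/
import Mathlib

section
/- For all r > 0 and 0 < u ≤ r/2, the shrinkage X = r + u/2 - √(4r² - 3u²)/2 satisfies u/2 ≤ X ≤ u/2 + u²/r; in particular X → u/2 relative to u as u/r → 0, i.e., |X - u/2| ≤ u²/r. -/
/-- for 0 < u ≤ r/2, the shrinkage X = r + u/2 - √(4r² - 3u²)/2
satisfies u/2 ≤ X ≤ u/2 + u²/r; in particular |X - u/2| ≤ u²/r. -/
theorem stmt_10 (r u : ℝ) (hr : 0 < r) (hu0 : 0 < u) (hur : u ≤ r / 2) :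
    u / 2 ≤ r + u / 2 - Real.sqrt (4 * r ^ 2 - 3 * u ^ 2) / 2 ∧
    r + u / 2 - Real.sqrt (4 * r ^ 2 - 3 * u ^ 2) / 2 ≤ u / 2 + u ^ 2 / r ∧
    |(r + u / 2 - Real.sqrt (4 * r ^ 2 - 3 * u ^ 2) / 2) - u / 2| ≤ u ^ 2 / r := by
  have hnn : (0:ℝ) ≤ 4 * r ^ 2 - 3 * u ^ 2 := by nlinarith
  set s := Real.sqrt (4 * r ^ 2 - 3 * u ^ 2) with hs
  have hsq : s ^ 2 = 4 * r ^ 2 - 3 * u ^ 2 := Real.sq_sqrt hnn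
  have hs0 : 0 ≤ s := Real.sqrt_nonneg _
  have hsle : s ≤ 2 * r := by nlinarith
  have hsge : 2 * r - 2 * (u ^ 2 / r) ≤ s := by
    have h1 : (2 * r - 2 * (u ^ 2 / r)) ^ 2 ≤ s ^ 2 := by
      rw [hsq]
      have : (2 * r - 2 * (u ^ 2 / r)) ^ 2 = 4 * r ^ 2 - 8 * u ^ 2 + 4 * u ^ 4 / r ^ 2 := by
        field_simp; ring
      rw [this]
      have h2 : 4 * u ^ 4 / r ^ 2 ≤ 5 * u ^ 2 := by
        rw [div_le_iff₀ (by positivity)]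
        nlinarith [mul_nonneg (sq_nonneg u) (sq_nonneg u), sq_nonneg (u*r), mul_pos hu0 hu0, mul_le_mul_of_nonneg_left hur hu0.le]
      linarith
    nlinarith [sq_nonneg (s - (2 * r - 2 * (u ^ 2 / r))), sq_nonneg (s + (2 * r - 2 * (u ^ 2 / r)))]
  refine ⟨by linarith, by linarith, ?_⟩
  rw [abs_le]
  constructor <;> [nlinarith [sq_nonneg u, div_pos (by positivity : (0:ℝ) < u ^ 2) hr]; linarith]
end

section
/- For every integer k ≥ 2, (1/√3)·(2k/(2k-1))·(2k/(2k-1) + 1/√3) < k/(k-1). Consequently, since k/(k-1) < (π/3)·k/(k-1) < (π/2)·k/(k-1), the hexagonal coefficient is the smallest among {k/(k-1), (π/3)k/(k-1), (π/2)k/(k-1), (1/√3)(2k/(2k-1))(2k/(2k-1)+1/√3)}. -/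
/-- for every integer k ≥ 2 the hexagonal coefficient
(1/√3)(2k/(2k-1))(2k/(2k-1) + 1/√3) is smaller than k/(k-1), and since
k/(k-1) < (π/3)k/(k-1) < (π/2)k/(k-1), it is the smallest of all four coefficients. -/
theorem stmt_14 (k : ℕ) (hk : 2 ≤ k) :
    (1 / Real.sqrt 3) * (2 * k / (2 * k - 1)) *
        (2 * k / (2 * k - 1) + 1 / Real.sqrt 3) < (k : ℝ) / (k - 1) ∧
    (k : ℝ) / (k - 1) < (Real.pi / 3) * ((k : ℝ) / (k - 1)) ∧
    (Real.pi / 3) * ((k : ℝ) / (k - 1)) < (Real.pi / 2) * ((k : ℝ) / (k - 1)) := by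
  have hx : (2 : ℝ) ≤ (k : ℝ) := by exact_mod_cast hk
  set x : ℝ := (k : ℝ) with hxdef
  have hx1 : (1 : ℝ) < x := by linarith
  have h2x : (0 : ℝ) < 2 * x - 1 := by linarith
  have hxm : (0 : ℝ) < x - 1 := by linarith
  have hs0 : (0 : ℝ) < Real.sqrt 3 := Real.sqrt_pos.mpr (by norm_num)
  have hs : Real.sqrt 3 ^ 2 = 3 := Real.sq_sqrt (by norm_num)
  have hslt : Real.sqrt 3 < 7 / 4 := by nlinarith
  have hpos : 0 < x / (x - 1) := div_pos (by linarith) hxm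
  refine ⟨?_, ?_, ?_⟩
  · rw [div_add_div _ _ (ne_of_gt h2x) (ne_of_gt hs0), div_mul_div_comm, div_mul_div_comm,
      div_lt_div_iff₀ (by positivity) hxm]
    have h7 : Real.sqrt 3 * (x * (x - 1)) < 7 / 4 * (x * (x - 1)) :=
      mul_lt_mul_of_pos_right hslt (mul_pos (by linarith) hxm)
    have hx0 : (0:ℝ) < x := by linarith
    nlinarith [hs, mul_lt_mul_of_pos_left h7 (show (0:ℝ) < 4 * x by linarith),
      mul_pos (mul_pos hx0 hx0) hxm, hx0]
  · have h1 : (1 : ℝ) < Real.pi / 3 := by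
      have := Real.pi_gt_three
      linarith
    calc x / (x - 1) = 1 * (x / (x - 1)) := (one_mul _).symm
      _ < (Real.pi / 3) * (x / (x - 1)) := by
        exact mul_lt_mul_of_pos_right h1 hpos
  · have h2 : Real.pi / 3 < Real.pi / 2 := by
      have := Real.pi_pos
      linarith
    exact mul_lt_mul_of_pos_right h2 hpos
end
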